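/- arXiv:2106.16021 — 5 statements merged into one kernel-verified Lean document; each statement's English description precedes it below -/
import Mathlib

section
/- Let d ≥ 1 and let 𝕋^d = (ℝ/ℤ)^d be the d-dimensional torus with the quotient metric ρ(x,y) = max_{1≤i≤d} min_{k∈ℤ} |x̃_i − ỹ_i − k|. Every bijective isometry g : 𝕋^d → 𝕋^d is affine of the following form: there exist a signed permutation matrix M ∈ ℤ^{d×d} and a vector b ∈ ℝ^d such that g is induced by the map x ↦ M x + b of ℝ^d; equivalently, g is a finite composition of translations x ↦ x + v, coordinate sign flips x_i ↦ −x_i, and coordinate exchanges x_i ↔ x_j. -/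
/-- The `d`-dimensional torus `(ℝ/ℤ)^d`, with the sup-product of the quotient metrics. -/
abbrev Torus (d : ℕ) := Fin d → AddCircle (1 : ℝ)

/-- The quotient map `ℝ^d → 𝕋^d`. -/
noncomputable def quotMap (d : ℕ) (x : Fin d → ℝ) : Torus d :=
  fun i => (x i : AddCircle (1 : ℝ))

/-- A signed permutation matrix: each row and each column has exactly one nonzero
entry, and that entry is `±1`. -/
def IsSignedPermMatrix {d : ℕ} (M : Matrix (Fin d) (Fin d) ℤ) : Prop :=
  (∀ i, ∃! j, M i j ≠ 0) ∧ (∀ j, ∃! i, M i j ≠ 0) ∧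
    ∀ i j, M i j = 0 ∨ M i j = 1 ∨ M i j = -1

/-!
Lift `g ∘ quotMap` through the covering map `quotMap : ℝ^d → 𝕋^d` to a continuous map
`G : ℝ^d → ℝ^d`. Along a connected set a lift cannot cross the level `‖·‖ = 1/2` of the circle
norm, so on balls of radius `1/2` the lift of a 1-Lipschitz map is 1-Lipschitz, hence it is
1-Lipschitz everywhere. Composing with the lift of `g⁻¹` gives lifts of the identity, i.e.
translations, so `G` is a surjective isometry of `(ℝ^d, ‖·‖_∞)`, affine by Mazur–Ulam, and its
linear part maps `ℤ^d` to itself. An integer matrix preserving the sup norm has entries in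
`{0, ±1}`, a nonzero column for every index and at most one nonzero entry per row (otherwise
`e_j + e_k` or `e_j - e_k` would be mapped to a vector of norm `2`), so it is a signed
permutation matrix.
-/

open Topology Metric Matrix

section QuotMap

variable {d : ℕ}

noncomputable def quotMapHom (d : ℕ) : (Fin d → ℝ) →+ Torus d :=
  (QuotientAddGroup.mk' (AddSubgroup.zmultiples (1 : ℝ))).compLeft (Fin d)

lemma coe_quotMapHom : ⇑(quotMapHom d) = quotMap d := rfl

@[simp]
lemma quotMap_zero : quotMap d 0 = 0 :=
  map_zero (quotMapHom d)

lemma quotMap_add (x y : Fin d → ℝ) : quotMap d (x + y) = quotMap d x + quotMap d y :=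
  map_add (quotMapHom d) x y

lemma quotMap_sub (x y : Fin d → ℝ) : quotMap d (x - y) = quotMap d x - quotMap d y :=
  map_sub (quotMapHom d) x y

lemma quotMap_eq_zero_iff {v : Fin d → ℝ} : quotMap d v = 0 ↔ ∀ i, ∃ k : ℤ, v i = k := by
  simp only [funext_iff, quotMap, Pi.zero_apply]
  refine forall_congr' fun i => ?_
  rw [AddCircle.coe_eq_zero_iff]
  simp [eq_comm]

lemma quotMap_single_one (j : Fin d) : quotMap d (Pi.single j 1) = 0 :=
  quotMap_eq_zero_iff.2 fun i =>
    ⟨(Pi.single j 1 : Fin d → ℤ) i, by by_cases h : i = j <;> simp [h]⟩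

lemma isOpenQuotientMap_quotMap : IsOpenQuotientMap (quotMap d) :=
  IsOpenQuotientMap.piMap fun _ => QuotientAddGroup.isOpenQuotientMap_mk

lemma isCoveringMap_quotMap : IsCoveringMap (quotMap d) := by
  have hker : ((quotMapHom d).ker : Set (Fin d → ℝ)) = Set.range (Pi.map fun _ => Int.cast) := by
    ext v
    rw [SetLike.mem_coe, AddMonoidHom.mem_ker, coe_quotMapHom, quotMap_eq_zero_iff,
      Classical.skolem]
    simp only [Set.mem_range, funext_iff, Pi.map_apply, eq_comm]
  have hdisc : IsDiscrete ((quotMapHom d).ker : Set (Fin d → ℝ)) :=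
    hker ▸ (IsInducing.piMap fun _ => Int.isClosedEmbedding_coe_real.isInducing).isDiscrete_range
  exact (IsQuotientMap.isAddQuotientCoveringMap_of_isDiscrete_ker_addMonoidHom (f := quotMapHom d)
    isOpenQuotientMap_quotMap.isQuotientMap hdisc).isCoveringMap

lemma norm_quotMap_le (v : Fin d → ℝ) : ‖quotMap d v‖ ≤ ‖v‖ :=
  (pi_norm_le_iff_of_nonneg (norm_nonneg v)).2 fun i =>
    (QuotientAddGroup.norm_mk_le_norm).trans (norm_le_pi_norm v i)

lemma norm_quotMap_of_norm_le_half {v : Fin d → ℝ} (hv : ‖v‖ ≤ 1 / 2) :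
    ‖quotMap d v‖ = ‖v‖ := by
  refine le_antisymm (norm_quotMap_le v)
    ((pi_norm_le_iff_of_nonneg (norm_nonneg _)).2 fun i => ?_)
  have hvi : |v i| ≤ |(1 : ℝ)| / 2 := by
    rw [abs_one, ← Real.norm_eq_abs]
    exact (norm_le_pi_norm v i).trans (by linarith)
  calc ‖v i‖ = ‖(v i : AddCircle (1 : ℝ))‖ :=
        by rw [Real.norm_eq_abs, (AddCircle.norm_coe_eq_abs_iff 1 one_ne_zero).2 hvi]
    _ ≤ ‖quotMap d v‖ := norm_le_pi_norm (quotMap d v) i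

end QuotMap

section IntermediateValue

variable {X : Type*} [TopologicalSpace X] {S : Set X} {a : X}

lemma IsPreconnected.abs_lt_half_of_norm_coe_lt_half (hS : IsPreconnected S) {f : X → ℝ}
    (hf : ContinuousOn f S) (ha : a ∈ S) (hfa : |f a| < 1 / 2)
    (hnorm : ∀ x ∈ S, ‖(f x : AddCircle (1 : ℝ))‖ < 1 / 2) {x : X} (hx : x ∈ S) :
    |f x| < 1 / 2 := by
  have half : ‖((1 / 2 : ℝ) : AddCircle (1 : ℝ))‖ = 1 / 2 := by
    simpa using AddCircle.norm_half_period_eq (1 : ℝ)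
  by_contra! hfx
  rcases le_abs'.1 hfx with hneg | hpos
  · obtain ⟨y, hy, hfy⟩ := hS.intermediate_value hx ha hf
      ⟨hneg, by linarith [neg_abs_le (f a)]⟩
    have := hnorm y hy
    rw [hfy, AddCircle.coe_neg, norm_neg, half] at this
    exact this.false
  · obtain ⟨y, hy, hfy⟩ := hS.intermediate_value ha hx hf
      ⟨by linarith [le_abs_self (f a)], hpos⟩
    have := hnorm y hy
    rw [hfy, half] at this
    exact this.false

variable {d : ℕ}

lemma IsPreconnected.norm_lt_half_of_norm_quotMap_lt_half (hS : IsPreconnected S)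
    {w : X → Fin d → ℝ} (hw : ContinuousOn w S) (ha : a ∈ S) (hwa : ‖w a‖ < 1 / 2)
    (hnorm : ∀ x ∈ S, ‖quotMap d (w x)‖ < 1 / 2) {x : X} (hx : x ∈ S) : ‖w x‖ < 1 / 2 := by
  rw [pi_norm_lt_iff one_half_pos] at hwa ⊢
  intro i
  simp only [Real.norm_eq_abs] at hwa ⊢
  exact hS.abs_lt_half_of_norm_coe_lt_half ((continuous_apply i).comp_continuousOn hw) ha (hwa i)
    (fun y hy => (norm_le_pi_norm (quotMap d (w y)) i).trans_lt (hnorm y hy)) hx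

end IntermediateValue

open NNReal in
lemma LipschitzWith.of_dist_le_mul_of_dist_lt {E F : Type*} [NormedAddCommGroup E]
    [NormedSpace ℝ E] [PseudoMetricSpace F] {f : E → F} {K : ℝ≥0} {r : ℝ} (hr : 0 < r)
    (h : ∀ x y, dist x y < r → dist (f x) (f y) ≤ K * dist x y) : LipschitzWith K f := by
  refine LipschitzWith.of_dist_le_mul fun x y => ?_
  obtain ⟨n, hn⟩ := exists_nat_gt (dist x y / r)
  have hn0 : (0 : ℝ) < n := lt_of_le_of_lt (by positivity) hn
  let p : ℕ → E := fun k => AffineMap.lineMap x y ((k : ℝ) / n)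
  have hstep : ∀ k, dist (p k) (p (k + 1)) = dist x y / n := by
    intro k
    rw [dist_lineMap_lineMap, Real.dist_eq, Nat.cast_succ, div_sub_div_same, sub_add_cancel_left,
      abs_div, abs_neg, abs_one, abs_of_pos hn0, one_div_mul_eq_div]
  have hsmall : dist x y / n < r := by
    rw [div_lt_iff₀ hn0]; rwa [div_lt_iff₀ hr, mul_comm] at hn
  calc dist (f x) (f y) = dist (f (p 0)) (f (p n)) := by simp [p, hn0.ne']
    _ ≤ ∑ k ∈ Finset.range n, dist (f (p k)) (f (p (k + 1))) :=
      dist_le_range_sum_dist (fun k => f (p k)) n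
    _ ≤ ∑ _k ∈ Finset.range n, K * (dist x y / n) :=
      Finset.sum_le_sum fun k _ => (h _ _ ((hstep k).trans_lt hsmall)).trans_eq (by rw [hstep])
    _ = K * dist x y := by
      rw [Finset.sum_const, Finset.card_range, nsmul_eq_mul]; field_simp

noncomputable def Isometry.isometryEquivOfBijective {α β : Type*} [PseudoEMetricSpace α]
    [PseudoEMetricSpace β] {f : α → β} (hf : Isometry f) (hbij : Function.Bijective f) : α ≃ᵢ β :=
  { Equiv.ofBijective f hbij with isometry_toFun := hf }

@[simp]
lemma Isometry.coe_isometryEquivOfBijective {α β : Type*} [PseudoEMetricSpace α]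
    [PseudoEMetricSpace β] {f : α → β} (hf : Isometry f) (hbij : Function.Bijective f) :
    ⇑(hf.isometryEquivOfBijective hbij) = f :=
  rfl

section Lift

variable {d : ℕ}

lemma lipschitzWith_quotMap : LipschitzWith 1 (quotMap d) :=
  LipschitzWith.of_dist_le_mul fun x y => by
    rw [dist_eq_norm, dist_eq_norm, ← quotMap_sub, NNReal.coe_one, one_mul]
    exact norm_quotMap_le _

lemma exists_continuous_lift {φ : (Fin d → ℝ) → Torus d} (hφ : Continuous φ) :
    ∃ G : (Fin d → ℝ) → Fin d → ℝ, Continuous G ∧ ∀ x, quotMap d (G x) = φ x := by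
  obtain ⟨e, he⟩ := isOpenQuotientMap_quotMap.surjective (φ 0)
  obtain ⟨G, ⟨-, hG⟩, -⟩ :=
    isCoveringMap_quotMap.existsUnique_continuousMap_lifts ⟨φ, hφ⟩ 0 e he
  exact ⟨G, G.continuous, congrFun hG⟩

lemma LipschitzWith.of_quotMap_comp {φ : (Fin d → ℝ) → Torus d} (hφ : LipschitzWith 1 φ)
    {G : (Fin d → ℝ) → Fin d → ℝ} (hG : Continuous G) (hGφ : ∀ x, quotMap d (G x) = φ x) :
    LipschitzWith 1 G := by
  refine LipschitzWith.of_dist_le_mul_of_dist_lt one_half_pos fun x y hxy => ?_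
  have hquot : ∀ z, ‖quotMap d (G z - G y)‖ ≤ dist z y := fun z => by
    simpa [quotMap_sub, hGφ, ← dist_eq_norm] using hφ.dist_le_mul z y
  have hsmall : ‖G x - G y‖ < 1 / 2 :=
    (convex_ball y (1 / 2)).isPreconnected.norm_lt_half_of_norm_quotMap_lt_half
      (w := fun z => G z - G y) (hG.sub continuous_const).continuousOn
      (mem_ball_self one_half_pos) (by simp) (fun z hz => (hquot z).trans_lt hz) hxy
  rw [NNReal.coe_one, one_mul, dist_eq_norm, ← norm_quotMap_of_norm_le_half hsmall.le]
  exact hquot x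

lemma eq_add_of_quotMap_comp_eq {F : (Fin d → ℝ) → Fin d → ℝ} (hF : Continuous F)
    (hq : ∀ x, quotMap d (F x) = quotMap d x) (x : Fin d → ℝ) : F x = x + F 0 := by
  refine congrFun (isCoveringMap_quotMap.eq_of_comp_eq hF (continuous_id.add continuous_const)
    (funext fun z => ?_) 0 (zero_add _).symm) x
  simp [quotMap_add, hq]

lemma exists_lipschitzWith_lift (g : Torus d ≃ᵢ Torus d) :
    ∃ G : (Fin d → ℝ) → Fin d → ℝ,
      LipschitzWith 1 G ∧ ∀ x, quotMap d (G x) = g (quotMap d x) := by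
  have hφ : LipschitzWith 1 (g ∘ quotMap d) := by
    simpa using g.isometry.lipschitz.comp lipschitzWith_quotMap
  obtain ⟨G, hG, hGφ⟩ := exists_continuous_lift hφ.continuous
  exact ⟨G, hφ.of_quotMap_comp hG hGφ, hGφ⟩

lemma exists_isometryEquiv_lift (g : Torus d ≃ᵢ Torus d) :
    ∃ E : (Fin d → ℝ) ≃ᵢ (Fin d → ℝ), ∀ x, quotMap d (E x) = g (quotMap d x) := by
  obtain ⟨G, hG, hGq⟩ := exists_lipschitzWith_lift g
  obtain ⟨G', hG', hG'q⟩ := exists_lipschitzWith_lift g.symm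
  have hG'G : ∀ x, G' (G x) = x + G' (G 0) :=
    eq_add_of_quotMap_comp_eq (hG'.continuous.comp hG.continuous) fun x => by simp [hG'q, hGq]
  have hGG' : ∀ x, G (G' x) = x + G (G' 0) :=
    eq_add_of_quotMap_comp_eq (hG.continuous.comp hG'.continuous) fun x => by simp [hG'q, hGq]
  have hiso : Isometry G := Isometry.of_dist_eq fun x y => by
    refine le_antisymm (by simpa using hG.dist_le_mul x y) ?_
    calc dist x y = dist (G' (G x)) (G' (G y)) := by
          rw [hG'G x, hG'G y, dist_add_right]
      _ ≤ dist (G x) (G y) := by simpa using hG'.dist_le_mul (G x) (G y)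
  have hsurj : Function.Surjective G := fun z =>
    ⟨G' (z - G (G' 0)), by simpa using hGG' (z - G (G' 0))⟩
  exact ⟨hiso.isometryEquivOfBijective ⟨hiso.injective, hsurj⟩, hGq⟩

end Lift

section SignedPerm

variable {d : ℕ}

lemma isSignedPermMatrix_of_row_subsingleton {M : Matrix (Fin d) (Fin d) ℤ}
    (hentry : ∀ i j, M i j = 0 ∨ M i j = 1 ∨ M i j = -1) (hcol : ∀ j, ∃ i, M i j ≠ 0)
    (hrow : ∀ i j k, M i j ≠ 0 → M i k ≠ 0 → j = k) : IsSignedPermMatrix M := by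
  choose σ hσ using hcol
  have hσ_surj : Function.Surjective σ :=
    Finite.injective_iff_surjective.1 fun j k h => hrow (σ j) j k (hσ j) (h ▸ hσ k)
  refine ⟨fun i => ?_, fun j => ⟨σ j, hσ j, fun i hi => ?_⟩, hentry⟩
  · obtain ⟨j, rfl⟩ := hσ_surj i
    exact ⟨j, hσ j, fun k hk => hrow _ _ _ hk (hσ j)⟩
  · obtain ⟨k, rfl⟩ := hσ_surj i
    exact congrArg σ (hrow _ _ _ (hσ k) hi)

lemma norm_single_add_smul_single_le {j k : Fin d} (hjk : j ≠ k) {s : ℝ} (hs : |s| ≤ 1) :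
    ‖Pi.single j (1 : ℝ) + s • Pi.single k 1‖ ≤ 1 := by
  refine (pi_norm_le_iff_of_nonneg zero_le_one).2 fun l => ?_
  by_cases hlj : l = j
  · subst hlj; simp [hjk]
  · by_cases hlk : l = k
    · subst hlk; simpa [hlj] using hs
    · simp [hlj, hlk]

lemma isSignedPermMatrix_of_norm_mulVec {M : Matrix (Fin d) (Fin d) ℤ}
    (hM : ∀ x : Fin d → ℝ, ‖M.map (Int.cast : ℤ → ℝ) *ᵥ x‖ = ‖x‖) : IsSignedPermMatrix M := by
  have hcoord : ∀ x i, |(M.map (Int.cast : ℤ → ℝ) *ᵥ x) i| ≤ ‖x‖ := fun x i => by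
    rw [← hM x, ← Real.norm_eq_abs]
    exact norm_le_pi_norm _ i
  have hcomb : ∀ i j k s, j ≠ k → |s| ≤ 1 → |(M i j : ℝ) + s * M i k| ≤ 1 :=
    fun i j k s hjk hs => by
      simpa [Matrix.mulVec_add, Matrix.mulVec_smul, Matrix.mulVec_single_one, mul_comm s] using
        (hcoord (Pi.single j 1 + s • Pi.single k 1) i).trans
          (norm_single_add_smul_single_le hjk hs)
  refine isSignedPermMatrix_of_row_subsingleton (fun i j => ?_) (fun j => ?_) fun i j k hj hk => ?_
  · have h := hcoord (Pi.single j 1) i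
    rw [Pi.norm_single, norm_one, Matrix.mulVec_single_one, Matrix.col_apply, Matrix.map_apply] at h
    have : |M i j| ≤ 1 := by exact_mod_cast h
    rw [abs_le] at this
    omega
  · by_contra! hzero
    have := hM (Pi.single j 1)
    rw [Matrix.mulVec_single_one, Pi.norm_single, norm_one] at this
    have hcol : (M.map (Int.cast : ℤ → ℝ)).col j = 0 := by
      ext i
      simp [hzero i]
    rw [hcol, norm_zero] at this
    exact zero_ne_one this
  · by_contra hjk
    have hplus := hcomb i j k 1 hjk (by simp)
    have hminus := hcomb i j k (-1) hjk (by simp)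
    simp only [one_mul, neg_one_mul, ← sub_eq_add_neg] at hplus hminus
    replace hplus : |M i j + M i k| ≤ 1 := by exact_mod_cast hplus
    replace hminus : |M i j - M i k| ≤ 1 := by exact_mod_cast hminus
    rw [abs_le] at hplus hminus
    omega

lemma exists_intMatrix_mulVec_eq (L : (Fin d → ℝ) →ₗ[ℝ] Fin d → ℝ)
    (hL : ∀ j, quotMap d (L (Pi.single j 1)) = 0) :
    ∃ M : Matrix (Fin d) (Fin d) ℤ, ∀ x, M.map (Int.cast : ℤ → ℝ) *ᵥ x = L x := by
  choose M hM using fun i j => quotMap_eq_zero_iff.1 (hL j) i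
  refine ⟨M, fun x => ?_⟩
  rw [← LinearMap.toMatrix'_mulVec L]
  congr 1
  ext i j
  rw [LinearMap.toMatrix'_apply, hM]
  rfl

end SignedPerm

theorem bijective_isometry_of_torus_is_signed_perm_affine_general
    (d : ℕ)
    (g : Torus d → Torus d) (hbij : Function.Bijective g) (hiso : Isometry g) :
    ∃ M : Matrix (Fin d) (Fin d) ℤ, IsSignedPermMatrix M ∧
      ∃ b : Fin d → ℝ, ∀ x : Fin d → ℝ,
        g (quotMap d x) = quotMap d (fun i => (∑ j, (M i j : ℝ) * x j) + b i) := by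
  obtain ⟨E, hE⟩ := exists_isometryEquiv_lift (hiso.isometryEquivOfBijective hbij)
  simp only [Isometry.coe_isometryEquivOfBijective] at hE
  set L := E.toRealLinearIsometryEquiv
  have hL : ∀ x, E x = L x + E 0 := fun x => by simp [L]
  obtain ⟨M, hM⟩ : ∃ M : Matrix (Fin d) (Fin d) ℤ, ∀ x, M.map (Int.cast : ℤ → ℝ) *ᵥ x = L x :=
    exists_intMatrix_mulVec_eq L.toLinearMap fun j => by
      simp [L, quotMap_sub, hE, quotMap_single_one]
  refine ⟨M, isSignedPermMatrix_of_norm_mulVec fun x => by rw [hM]; exact L.norm_map x,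
    E 0, fun x => ?_⟩
  rw [← hE, hL, ← hM]
  rfl

/-- Every bijective isometry of the torus (with the sup quotient metric) is affine,
induced by `x ↦ M x + b` for a signed permutation matrix `M` and a vector `b ∈ ℝ^d`. -/
theorem bijective_isometry_of_torus_is_signed_perm_affine
    (d : ℕ) (hd : 1 ≤ d)
    (g : Torus d → Torus d) (hbij : Function.Bijective g) (hiso : Isometry g) :
    ∃ M : Matrix (Fin d) (Fin d) ℤ, IsSignedPermMatrix M ∧
      ∃ b : Fin d → ℝ, ∀ x : Fin d → ℝ,
        g (quotMap d x) = quotMap d (fun i => (∑ j, (M i j : ℝ) * x j) + b i) :=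
  bijective_isometry_of_torus_is_signed_perm_affine_general d g hbij hiso
end

section
/- Let N ≥ 3 be an integer. For α = (α₁,…,α_N) ∈ ℝ^N define the map T_α on the circle ℝ/ℤ by T_α x = x + α_i (mod 1) whenever the representative of x in [0,1) lies in [(i−1)/N, i/N), and let S(T_α) = ⋃_{m≥0} ⋂_{k≥m} T_α^k(ℝ/ℤ) be the set of points belonging to all but finitely many of the images T_α^k(ℝ/ℤ). Then for every ε > 0 there exists α ∈ ℝ^N such that the Haar (Lebesgue) measure of S(T_α) is at most 2ε; consequently, the infimum over α ∈ ℝ^N of the Haar measure of S(T_α) equals 0. -/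
/-!
Take `β ≤ 1/N` small. Translating every piece but the last onto `[-β, 1/N - β)` and the last
one onto `[β - 1/N, β)` (mod 1) sends the whole circle into `[-1/N, 1/N)`. On that interval
`T` moves every point by `β` towards `0`: `[0, 1/N)` is the first piece and is moved down,
`[-1/N, 0)` lies in the last piece and is moved up. Hence after `k ≥ 1/(Nβ)` further steps
the image of `T` lies in `[-β, β)`, and so does the focusing set, which is contained in every
image `T^k(X)` because these decrease. Its measure is at most `2β`.
-/

open MeasureTheory Filter

instance : Fact ((0:ℝ) < 1) := ⟨zero_lt_one⟩

/-- The representative in `[0,1)` of a point of the circle `ℝ/ℤ`. -/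
noncomputable def circleRep (x : AddCircle (1:ℝ)) : ℝ :=
  (AddCircle.equivIco 1 0 x : ℝ)

/-- The piecewise translation `T_α` of the circle: a point whose representative lies in
`[i/N, (i+1)/N)` is translated by `α i` (0-indexed pieces). -/
noncomputable def pieceTranslation {N : ℕ} (α : Fin N → ℝ) (x : AddCircle (1:ℝ)) :
    AddCircle (1:ℝ) :=
  if h : ⌊circleRep x * N⌋₊ < N then x + (α ⟨⌊circleRep x * N⌋₊, h⟩ : ℝ) else x

/-- The focusing set `S(T) = liminf_n T^n X`: points belonging to all but finitely
many of the images `T^n X`. -/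
def focusingSet {X : Type*} (T : X → X) : Set X :=
  ⋃ m : ℕ, ⋂ k : ℕ, ⋂ (_ : m ≤ k), T^[k] '' Set.univ

open Set

local notation "𝕋" => AddCircle (1 : ℝ)

lemma circleRep_mem_Ico (x : 𝕋) : circleRep x ∈ Ico (0:ℝ) 1 := by
  simpa [circleRep] using (AddCircle.equivIco 1 0 x).2

lemma coe_circleRep (x : 𝕋) : ((circleRep x : ℝ) : 𝕋) = x :=
  (AddCircle.equivIco (1:ℝ) 0).symm_apply_apply x

lemma circleRep_coe {r : ℝ} (hr : r ∈ Ico (0:ℝ) 1) : circleRep (r : 𝕋) = r := by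
  rw [circleRep, AddCircle.coe_equivIco_mk_apply, div_one, mul_one, Int.fract_eq_self.2 hr]

section Pieces

variable {N : ℕ}

lemma exists_coe_eq_of_mem_piece (hN : 0 < N) (x : 𝕋) :
    ∃ i : Fin N, ∃ r ∈ Ico ((i : ℝ) / N) ((i + 1) / N), (r : 𝕋) = x := by
  have hNR : (0:ℝ) < N := by exact_mod_cast hN
  have hr := circleRep_mem_Ico x
  have hrN : 0 ≤ circleRep x * N := mul_nonneg hr.1 hNR.le
  have hlt : ⌊circleRep x * N⌋₊ < N := by
    rw [Nat.floor_lt hrN]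
    exact mul_lt_of_lt_one_left hNR hr.2
  refine ⟨⟨_, hlt⟩, circleRep x, ⟨?_, ?_⟩, coe_circleRep x⟩
  · rw [div_le_iff₀ hNR]
    exact Nat.floor_le hrN
  · rw [lt_div_iff₀ hNR]
    exact Nat.lt_floor_add_one _

lemma pieceTranslation_coe (α : Fin N → ℝ) (i : Fin N) {r : ℝ}
    (hr : r ∈ Ico ((i : ℝ) / N) ((i + 1) / N)) :
    pieceTranslation α (r : 𝕋) = ((r + α i : ℝ) : 𝕋) := by
  have hNR : (0:ℝ) < N := by exact_mod_cast i.pos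
  have hiN : (i : ℝ) + 1 ≤ N := by exact_mod_cast i.isLt
  have hr01 : r ∈ Ico (0:ℝ) 1 :=
    ⟨(div_nonneg i.val.cast_nonneg hNR.le).trans hr.1,
      hr.2.trans_le ((div_le_one hNR).2 hiN)⟩
  have hfloor : ⌊r * N⌋₊ = i :=
    (Nat.floor_eq_iff (mul_nonneg hr01.1 hNR.le)).2
      ⟨(div_le_iff₀ hNR).1 hr.1, (lt_div_iff₀ hNR).1 hr.2⟩
  have hpiece : (⟨⌊r * N⌋₊, hfloor ▸ i.isLt⟩ : Fin N) = i := Fin.ext hfloor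
  rw [pieceTranslation, circleRep_coe hr01, dif_pos (hfloor ▸ i.isLt), hpiece,
    AddCircle.coe_add]

end Pieces

def centredIco (ℓ : ℝ) : Set (𝕋) := ((↑) : ℝ → 𝕋) '' Ico (-ℓ) ℓ

lemma centredIco_mono : Monotone centredIco :=
  fun _ _ h => image_mono (Ico_subset_Ico (neg_le_neg h) h)

lemma volume_centredIco_le (ℓ : ℝ) : volume (centredIco ℓ) ≤ ENNReal.ofReal (2 * ℓ) := by
  have hball : centredIco ℓ ⊆ Metric.closedBall 0 ℓ := by
    rintro _ ⟨s, hs, rfl⟩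
    rw [Metric.mem_closedBall, dist_zero_right]
    exact QuotientAddGroup.norm_mk_le_norm.trans (abs_le.2 ⟨hs.1, hs.2.le⟩)
  calc volume (centredIco ℓ) ≤ volume (Metric.closedBall (0 : 𝕋) ℓ) :=
        measure_mono hball
    _ = ENNReal.ofReal (min 1 (2 * ℓ)) := AddCircle.volume_closedBall (T := 1) ℓ
    _ ≤ ENNReal.ofReal (2 * ℓ) := ENNReal.ofReal_le_ofReal (min_le_right _ _)

lemma range_iterate_succ_subset {X : Type*} {T : X → X} {A : ℕ → Set X} (h0 : range T ⊆ A 0)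
    (hA : ∀ k, MapsTo T (A k) (A (k + 1))) (k : ℕ) : range T^[k + 1] ⊆ A k := by
  induction k with
  | zero => simpa using h0
  | succ k ih =>
    rw [Function.iterate_succ', range_comp]
    exact (image_mono ih).trans (hA k).image_subset

lemma focusingSet_subset_range_iterate {X : Type*} (T : X → X) (k : ℕ) :
    focusingSet T ⊆ range T^[k] := by
  intro x hx
  obtain ⟨m, hm⟩ := mem_iUnion.1 hx
  have hx' : x ∈ T^[k + m] '' univ := mem_iInter₂.1 hm (k + m) (by omega)
  rw [image_univ, Function.iterate_add] at hx'
  exact range_comp_subset_range _ _ hx'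

noncomputable def contractingShifts (N : ℕ) (β : ℝ) : Fin N → ℝ :=
  fun i => if (i : ℕ) + 1 = N then β else -((i : ℝ) / N) - β

section Contraction

variable {N : ℕ} {β : ℝ}

lemma pieceTranslation_contractingShifts_mem (hN : 0 < N) (hβ0 : 0 ≤ β) (hβ : β ≤ 1 / N)
    (x : 𝕋) : pieceTranslation (contractingShifts N β) x ∈ centredIco (1 / N) := by
  have hNR : (0:ℝ) < N := by exact_mod_cast hN
  obtain ⟨i, r, hr, rfl⟩ := exists_coe_eq_of_mem_piece hN x
  have hsplit := add_div (i : ℝ) 1 N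
  rw [pieceTranslation_coe _ i hr, contractingShifts]
  split_ifs with hi
  · have hend : ((i : ℝ) + 1) / N = 1 := by
      rw [← Nat.cast_add_one, hi, div_self hNR.ne']
    refine ⟨r + β - 1, ⟨by linarith [hr.1], by linarith [hr.2]⟩, ?_⟩
    rw [← AddCircle.coe_add_period 1 (r + β - 1), sub_add_cancel]
  · exact ⟨_, ⟨by linarith [hr.1], by linarith [hr.2]⟩, rfl⟩

lemma pieceTranslation_contractingShifts_coe_of_nonneg (hN : 2 ≤ N) {s : ℝ}
    (hs : s ∈ Ico 0 (1 / (N : ℝ))) :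
    pieceTranslation (contractingShifts N β) (s : 𝕋) = ((s - β : ℝ) : 𝕋) := by
  let i₀ : Fin N := ⟨0, by omega⟩
  have hi₀ : (i₀ : ℝ) = 0 := Nat.cast_zero
  rw [pieceTranslation_coe _ i₀ (by rwa [hi₀, zero_div, zero_add]), contractingShifts,
    if_neg (show ¬0 + 1 = N by omega), hi₀, zero_div, neg_zero, zero_sub, sub_eq_add_neg]

lemma pieceTranslation_contractingShifts_coe_of_neg (hN : 0 < N) {s : ℝ}
    (hs : s ∈ Ico (-(1 / (N : ℝ))) 0) :
    pieceTranslation (contractingShifts N β) (s : 𝕋) = ((s + β : ℝ) : 𝕋) := by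
  have hNR : (0:ℝ) < N := by exact_mod_cast hN
  let i₁ : Fin N := ⟨N - 1, by omega⟩
  have hi₁ : (i₁ : ℕ) + 1 = N := Nat.sub_add_cancel hN
  have hend : ((i₁ : ℝ) + 1) / N = 1 := by rw [← Nat.cast_add_one, hi₁, div_self hNR.ne']
  have hsplit := add_div (i₁ : ℝ) 1 N
  rw [← AddCircle.coe_add_period 1 s,
    pieceTranslation_coe _ i₁ ⟨by linarith [hs.1], by linarith [hs.2]⟩, contractingShifts,
    if_pos hi₁, add_right_comm, AddCircle.coe_add_period]

lemma mapsTo_pieceTranslation_contractingShifts (hN : 2 ≤ N) {ℓ : ℝ} (hℓ : ℓ ≤ 1 / N) :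
    MapsTo (pieceTranslation (contractingShifts N β)) (centredIco ℓ)
      (centredIco (max (ℓ - β) β)) := by
  rintro _ ⟨s, hs, rfl⟩
  have hm₁ := le_max_left (ℓ - β) β
  have hm₂ := le_max_right (ℓ - β) β
  rcases le_or_gt 0 s with hs0 | hs0
  · rw [pieceTranslation_contractingShifts_coe_of_nonneg hN ⟨hs0, hs.2.trans_le hℓ⟩]
    exact ⟨_, ⟨by linarith, by linarith [hs.2]⟩, rfl⟩
  · rw [pieceTranslation_contractingShifts_coe_of_neg (by omega) ⟨by linarith [hs.1], hs0⟩]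
    exact ⟨_, ⟨by linarith [hs.1], by linarith⟩, rfl⟩

lemma range_iterate_pieceTranslation_contractingShifts_subset (hN : 2 ≤ N) (hβ0 : 0 ≤ β)
    (hβ : β ≤ 1 / N) (k : ℕ) :
    range (pieceTranslation (contractingShifts N β))^[k + 1] ⊆
      centredIco (max (1 / N - k * β) β) := by
  refine range_iterate_succ_subset (A := fun k : ℕ => centredIco (max (1 / N - k * β) β)) ?_
    (fun k => ?_) k
  · rintro _ ⟨x, rfl⟩
    refine centredIco_mono ?_ (pieceTranslation_contractingShifts_mem (by omega) hβ0 hβ x)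
    simp
  · have hkβ : 0 ≤ k * β := by positivity
    refine (mapsTo_pieceTranslation_contractingShifts hN (max_le (by linarith) hβ)).mono_right
      (centredIco_mono ?_)
    push_cast
    rw [← max_sub_sub_right, sub_self, add_one_mul, ← sub_sub]
    exact max_le (max_le (le_max_left _ _) (hβ0.trans (le_max_right _ _))) (le_max_right _ _)

end Contraction

theorem exists_volume_focusingSet_pieceTranslation_le {N : ℕ} (hN : 2 ≤ N) {ε : ℝ}
    (hε : 0 < ε) :
    ∃ α : Fin N → ℝ,
      volume (focusingSet (pieceTranslation α)) ≤ ENNReal.ofReal (2 * ε) := by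
  set β := min ε (1 / N)
  have hβ0 : 0 < β := lt_min hε (by positivity)
  obtain ⟨k, hk⟩ := exists_nat_ge (1 / N / β)
  have hkβ : 1 / N - k * β ≤ β := by
    have := (div_le_iff₀ hβ0).1 hk
    linarith
  refine ⟨contractingShifts N β, ?_⟩
  calc volume (focusingSet (pieceTranslation (contractingShifts N β)))
      ≤ volume (centredIco β) := by
        refine measure_mono ((focusingSet_subset_range_iterate _ (k + 1)).trans ?_)
        simpa only [max_eq_right hkβ] using
          range_iterate_pieceTranslation_contractingShifts_subset hN hβ0.le (min_le_right _ _) k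
    _ ≤ ENNReal.ofReal (2 * β) := volume_centredIco_le β
    _ ≤ ENNReal.ofReal (2 * ε) := ENNReal.ofReal_le_ofReal (by linarith [min_le_left ε (1 / N)])

/-- For every `ε > 0` there is a choice of the translation vector `α` for which the
focusing set of `T_α` has Haar measure at most `2ε`; consequently the infimum over `α`
of the measure of the focusing set is `0`. -/
theorem focusing_set_measure_inf_zero (N : ℕ) (hN : 3 ≤ N) :
    (∀ ε : ℝ, 0 < ε → ∃ α : Fin N → ℝ,
      volume (focusingSet (pieceTranslation α)) ≤ ENNReal.ofReal (2 * ε)) ∧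
    ⨅ α : Fin N → ℝ, volume (focusingSet (pieceTranslation α)) = 0 := by
  have hvol : ∀ ε : ℝ, 0 < ε → ∃ α : Fin N → ℝ,
      volume (focusingSet (pieceTranslation α)) ≤ ENNReal.ofReal (2 * ε) :=
    fun _ => exists_volume_focusingSet_pieceTranslation_le (by omega)
  refine ⟨hvol, le_antisymm (ENNReal.le_of_forall_pos_le_add fun δ hδ _ => ?_) zero_le⟩
  obtain ⟨α, hα⟩ := hvol (δ / 2) (by positivity)
  calc ⨅ α : Fin N → ℝ, volume (focusingSet (pieceTranslation α))
      ≤ volume (focusingSet (pieceTranslation α)) := iInf_le _ α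
    _ ≤ ENNReal.ofReal (2 * (δ / 2)) := hα
    _ = 0 + δ := by rw [mul_div_cancel₀ _ two_ne_zero, ENNReal.ofReal_coe_nnreal, zero_add]
end

section
/- Let d ≥ 1 and 𝕋^d = (ℝ/ℤ)^d. Call a map g : 𝕋^d → 𝕋^d a rational signed-permutation affine map if there exist a permutation σ of {1,…,d}, signs ε ∈ {−1,+1}^d, and a torsion element v ∈ 𝕋^d (i.e., N·v = 0 for some integer N ≥ 1) such that g(x)_i = ε_i x_{σ(i)} + v_i for all x. Let g₁, …, g_n be rational signed-permutation affine maps of 𝕋^d and let T : 𝕋^d → 𝕋^d be any map such that for every x ∈ 𝕋^d there exists an index i with T x = g_i x. Then T is weakly periodic in the following sense: there exists an integer M (depending only on g₁,…,g_n) such that for every x ∈ 𝕋^d the orbit {T^k x : k ∈ ℕ} has at most M elements. -/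
/-- A rational signed-permutation affine map of the torus:
`g(x)_i = ε_i x_{σ(i)} + v_i` with `σ` a permutation, `ε_i = ±1`,
and `v` a torsion element of the torus. -/
def IsRatSignedPermAffine {d : ℕ} (g : Torus d → Torus d) : Prop :=
  ∃ (σ : Equiv.Perm (Fin d)) (ε : Fin d → ℤ) (v : Torus d),
    (∀ i, ε i = 1 ∨ ε i = -1) ∧ (∃ N : ℕ, 1 ≤ N ∧ N • v = 0) ∧
    ∀ (x : Torus d) (i : Fin d), g x i = ε i • x (σ i) + v i

theorem Function.End.range_iterate_subset_image_apply {α ι : Type*}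
    {S : Submonoid (Function.End α)} {g : ι → Function.End α} (hg : ∀ i, g i ∈ S)
    {T : α → α} (hT : ∀ x, ∃ i, T x = g i x) (x : α) :
    Set.range (fun k => T^[k] x) ⊆ (fun h : Function.End α => h x) '' S := by
  rintro _ ⟨k, rfl⟩
  induction k with
  | zero => exact ⟨1, S.one_mem, rfl⟩
  | succ k ih =>
    obtain ⟨h, hS, hh⟩ := ih
    obtain ⟨i, hi⟩ := hT (T^[k] x)
    refine ⟨g i * h, S.mul_mem (hg i) hS, ?_⟩
    change g i (h x) = T^[k + 1] x
    rw [Function.iterate_succ_apply', hi]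
    exact congrArg (g i) hh

section SignedPermAffine

variable {ι A : Type*} [AddCommGroup A]

def signedPermAffine (σ : Equiv.Perm ι) (ε : ι → ℤˣ) (v : ι → A) :
    Function.End (ι → A) :=
  fun x i => ε i • x (σ i) + v i

theorem signedPermAffine_mul (σ τ : Equiv.Perm ι) (ε δ : ι → ℤˣ) (v w : ι → A) :
    signedPermAffine σ ε v * signedPermAffine τ δ w =
      signedPermAffine (σ.trans τ) (ε * (δ ∘ σ)) (fun i => ε i • w (σ i) + v i) := by
  funext x i
  change ε i • (δ (σ i) • x (τ (σ i)) + w (σ i)) + v i = _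
  simp [signedPermAffine, smul_add, mul_smul, add_assoc]

variable (ι A) in
def signedPermAffineSubmonoid (N : ℕ) : Submonoid (Function.End (ι → A)) where
  carrier := {f | ∃ σ ε v, N • v = 0 ∧ f = signedPermAffine σ ε v}
  one_mem' := ⟨1, 1, 0, smul_zero N, by funext x i; change x i = (1 : ℤˣ) • x i + 0; simp⟩
  mul_mem' := by
    rintro _ _ ⟨σ, ε, v, hv, rfl⟩ ⟨τ, δ, w, hw, rfl⟩
    refine ⟨_, _, _, ?_, signedPermAffine_mul σ τ ε δ v w⟩
    funext i
    change N • (ε i • w (σ i) + v i) = 0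
    rw [smul_add, smul_comm, show N • w (σ i) = 0 from congrFun hw (σ i), smul_zero, zero_add]
    exact congrFun hv i

theorem signedPermAffineSubmonoid_mono {N M : ℕ} (h : N ∣ M) :
    signedPermAffineSubmonoid ι A N ≤ signedPermAffineSubmonoid ι A M := by
  rintro _ ⟨σ, ε, v, hv, rfl⟩
  obtain ⟨c, rfl⟩ := h
  exact ⟨σ, ε, v, by rw [mul_comm, mul_smul, hv, smul_zero], rfl⟩

theorem finite_signedPermAffineSubmonoid [Finite ι] {N : ℕ} (hA : {a : A | N • a = 0}.Finite) :
    (signedPermAffineSubmonoid ι A N : Set (Function.End (ι → A))).Finite := by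
  have htorsion : {v : ι → A | N • v = 0}.Finite :=
    (Set.Finite.pi fun _ => hA).subset fun v hv i _ => congrFun hv i
  have : Finite {v : ι → A // N • v = 0} := htorsion.to_subtype
  refine (Set.finite_range
    fun p : Equiv.Perm ι × (ι → ℤˣ) × {v : ι → A // N • v = 0} =>
      signedPermAffine p.1 p.2.1 p.2.2.1).subset ?_
  rintro _ ⟨σ, ε, v, hv, rfl⟩
  exact ⟨(σ, ε, ⟨v, hv⟩), rfl⟩

end SignedPermAffine

theorem IsRatSignedPermAffine.exists_mem_signedPermAffineSubmonoid {d : ℕ}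
    {g : Torus d → Torus d} (hg : IsRatSignedPermAffine g) :
    ∃ N, 0 < N ∧ g ∈ signedPermAffineSubmonoid (Fin d) (AddCircle (1 : ℝ)) N := by
  obtain ⟨σ, ε, v, hε, ⟨N, hN, hv⟩, hgx⟩ := hg
  have hunit i : IsUnit (ε i) := Int.isUnit_iff.2 (hε i)
  refine ⟨N, hN, σ, fun i => (hunit i).unit, v, hv, ?_⟩
  funext x i
  simp [hgx, signedPermAffine]

theorem weakly_periodic_of_rat_signed_perm_affine_general
    (d n : ℕ)
    (g : Fin n → (Torus d → Torus d))
    (hg : ∀ i, IsRatSignedPermAffine (g i)) :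
    ∃ M : ℕ, ∀ T : Torus d → Torus d, (∀ x : Torus d, ∃ i : Fin n, T x = g i x) →
      ∀ x : Torus d, (Set.range fun k : ℕ => T^[k] x).Finite ∧
        (Set.range fun k : ℕ => T^[k] x).ncard ≤ M := by
  choose N hN hgN using fun i => (hg i).exists_mem_signedPermAffineSubmonoid
  set S := signedPermAffineSubmonoid (Fin d) (AddCircle (1 : ℝ)) (∏ i, N i)
  have hgS i : g i ∈ S :=
    signedPermAffineSubmonoid_mono (Finset.dvd_prod_of_mem N (Finset.mem_univ i)) (hgN i)
  have hS : (S : Set (Function.End (Torus d))).Finite :=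
    finite_signedPermAffineSubmonoid (AddCircle.finite_torsion 1 (Finset.prod_pos fun i _ => hN i))
  refine ⟨Set.ncard (S : Set (Function.End (Torus d))), fun T hT x => ?_⟩
  have horbit := Function.End.range_iterate_subset_image_apply hgS hT x
  exact ⟨(hS.image _).subset horbit,
    (Set.ncard_le_ncard horbit (hS.image _)).trans (Set.ncard_image_le hS)⟩

/-- A piecewise map built from rational signed-permutation affine maps of the torus is
weakly periodic: all its orbits have cardinality bounded by a constant `M` depending
only on the generating maps. -/
theorem weakly_periodic_of_rat_signed_perm_affine
    (d n : ℕ) (hd : 1 ≤ d)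
    (g : Fin n → (Torus d → Torus d))
    (hg : ∀ i, IsRatSignedPermAffine (g i)) :
    ∃ M : ℕ, ∀ T : Torus d → Torus d, (∀ x : Torus d, ∃ i : Fin n, T x = g i x) →
      ∀ x : Torus d, (Set.range fun k : ℕ => T^[k] x).Finite ∧
        (Set.range fun k : ℕ => T^[k] x).ncard ≤ M :=
  weakly_periodic_of_rat_signed_perm_affine_general d n g hg
end

section
/- Let d ≥ 1, let 𝕋^d = (ℝ/ℤ)^d carry its Haar probability measure m, and let g₁, …, g_n : 𝕋^d → 𝕋^d be bijections that preserve m and are such that the submonoid G of self-maps of 𝕋^d generated by {g₁, …, g_n} under composition is finite. Let X₁, …, X_n be a finite partition of 𝕋^d into Borel sets and define T : 𝕋^d → 𝕋^d by T x = g_i x for x ∈ X_i. Then there exists a T-invariant Borel probability measure μ that is absolutely continuous with respect to m; in fact one can take μ to be the normalized restriction of m to a suitable Borel set Y of positive Haar measure, i.e., μ(A) = m(A ∩ Y)/m(Y). -/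
open MeasureTheory

/-!
Take `Y = ⋂ k, range T^[k]`. Every iterate `T^[k]` agrees pointwise with some element of the
finite monoid `G` generated by the `gᵢ`, so some `u ∈ G` agrees with `T^[k]` on a set of
measure `≥ 1 / #G`, whose image under `u` is no smaller and lies in `range T^[k]`;
hence `m Y ≥ 1 / #G > 0`. Since `T` has finite fibres, `T '' Y = Y`. As `T` moves the pieces
`Xᵢ` by measure-preserving injections, it does not increase the measure of images; applied to
`S` and `Y \ S`, whose images cover `Y`, this forces `m (T '' S) = m S` for `S ⊆ Y`, which is
exactly the invariance of `m` conditioned on `Y`.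
-/

open Set Function ProbabilityTheory

section Iterates

variable {α : Type*} {T : α → α}

theorem exists_forall_of_forall_exists_of_antitone {ι : Type*} [Finite ι]
    {p : ι → ℕ → Prop} (hp : ∀ i, Antitone (p i)) (h : ∀ k, ∃ i, p i k) :
    ∃ i, ∀ k, p i k := by
  have key := iInf_iSup_of_antitone hp
  simp only [iInf_Prop_eq, iSup_Prop_eq] at key
  exact key ▸ h

theorem range_iterate_succ (T : α → α) (k : ℕ) : range T^[k + 1] = T '' range T^[k] := by
  rw [iterate_succ', range_comp]

theorem antitone_range_iterate (T : α → α) : Antitone fun k => range T^[k] :=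
  antitone_nat_of_succ_le fun k => by
    rw [iterate_succ]
    exact range_comp_subset_range _ _

theorem image_iInter_range_iterate (hT : ∀ y, (T ⁻¹' {y}).Finite) :
    T '' ⋂ k, range T^[k] = ⋂ k, range T^[k] := by
  refine Subset.antisymm ?_ fun y hy => ?_
  · rintro _ ⟨x, hx, rfl⟩
    refine mem_iInter.2 fun k => antitone_range_iterate T k.le_succ ?_
    change T x ∈ range T^[k + 1]
    rw [range_iterate_succ]
    exact mem_image_of_mem T (mem_iInter.1 hx k)
  · have : Finite (T ⁻¹' {y}) := (hT y).to_subtype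
    have hfibre : ∀ k, ∃ x : T ⁻¹' {y}, (x : α) ∈ range T^[k] := fun k => by
      obtain ⟨x, hx, hxy⟩ := range_iterate_succ T k ▸ mem_iInter.1 hy (k + 1)
      exact ⟨⟨x, hxy⟩, hx⟩
    obtain ⟨⟨x, hxy⟩, hx⟩ := exists_forall_of_forall_exists_of_antitone
      (p := fun (x : T ⁻¹' {y}) k => (x : α) ∈ range T^[k])
      (fun _ _ _ hkl hx => antitone_range_iterate T hkl hx) hfibre
    exact ⟨x, mem_iInter.2 hx, hxy⟩

theorem exists_mem_iterate_apply_eq {M : Submonoid (Function.End α)}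
    (hT : ∀ x, ∃ u ∈ M, T x = u x) (k : ℕ) (x : α) : ∃ u ∈ M, T^[k] x = u x := by
  induction k with
  | zero => exact ⟨1, M.one_mem, rfl⟩
  | succ k ih =>
    obtain ⟨u, hu, hux⟩ := ih
    obtain ⟨v, hv, hvx⟩ := hT (T^[k] x)
    exact ⟨v * u, M.mul_mem hv hu, by rw [iterate_succ_apply', hvx, hux]; rfl⟩

end Iterates

section Measure

variable {α : Type*} [MeasurableSpace α] {μ : Measure α} {T : α → α}

theorem measurePreserving_of_mem_closure {S : Set (Function.End α)}
    (hS : ∀ u ∈ S, MeasurePreserving u μ μ) {u : Function.End α}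
    (hu : u ∈ Submonoid.closure S) : MeasurePreserving u μ μ := by
  induction hu using Submonoid.closure_induction with
  | mem v hv => exact hS v hv
  | one => exact MeasurePreserving.id μ
  | mul a b _ _ ha hb => exact ha.comp hb

theorem measure_univ_le_card_mul_measure_range {S : Finset (Function.End α)}
    (hS : ∀ u ∈ S, MeasurePreserving u μ μ) (hT : ∀ x, ∃ u ∈ S, T x = u x) :
    μ univ ≤ S.card * μ (range T) := by
  have hpiece : ∀ u ∈ S, μ {x | T x = u x} ≤ μ (range T) := fun u hu =>
    calc μ {x | T x = u x} ≤ μ.map u (u '' {x | T x = u x}) :=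
          Measure.le_map_apply_image (hS u hu).measurable.aemeasurable _
      _ = μ (u '' {x | T x = u x}) := by rw [(hS u hu).map_eq]
      _ ≤ μ (range T) := measure_mono <| by
          rintro _ ⟨x, hx, rfl⟩
          exact ⟨x, hx⟩
  calc μ univ ≤ μ (⋃ u ∈ S, {x | T x = u x}) := measure_mono fun x _ => by simpa using hT x
    _ ≤ ∑ u ∈ S, μ {x | T x = u x} := measure_biUnion_finset_le S _
    _ ≤ ∑ _u ∈ S, μ (range T) := Finset.sum_le_sum hpiece
    _ = S.card * μ (range T) := by rw [Finset.sum_const, nsmul_eq_mul]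

theorem measure_iInter_range_iterate_pos [IsFiniteMeasure μ] [NeZero μ]
    {M : Submonoid (Function.End α)} (hM : (M : Set (Function.End α)).Finite)
    (hMμ : ∀ u ∈ M, MeasurePreserving u μ μ) (hT : ∀ x, ∃ u ∈ M, T x = u x)
    (hmeas : ∀ k, MeasurableSet (range T^[k])) : 0 < μ (⋂ k, range T^[k]) := by
  have hbound : ∀ k, μ univ / hM.toFinset.card ≤ μ (range T^[k]) := fun k =>
    ENNReal.div_le_of_le_mul' <| measure_univ_le_card_mul_measure_range
      (fun u hu => hMμ u (hM.mem_toFinset.1 hu))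
      (fun x => by simpa using exists_mem_iterate_apply_eq hT k x)
  rw [(antitone_range_iterate T).measure_iInter (fun k => (hmeas k).nullMeasurableSet)
    ⟨0, measure_ne_top μ _⟩]
  exact (ENNReal.div_pos (Measure.measure_univ_ne_zero.2 (NeZero.ne μ))
    (ENNReal.natCast_ne_top _)).trans_le (le_iInf hbound)

variable [IsFiniteMeasure μ] {Y : Set α}

theorem measure_image_eq_of_image_eq_self (hY : MeasurableSet Y) (hTY : T '' Y = Y)
    (hT : ∀ E, MeasurableSet E → μ (T '' E) ≤ μ E) {S : Set α} (hS : MeasurableSet S)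
    (hSY : S ⊆ Y) : μ (T '' S) = μ S := by
  have hcover : T '' S ∪ T '' (Y \ S) = Y := by
    rw [← image_union, union_sdiff_cancel hSY, hTY]
  have : μ S + μ (Y \ S) ≤ μ (T '' S) + μ (Y \ S) :=
    calc μ S + μ (Y \ S) = μ Y := by
          rw [measure_add_sdiff hS.nullMeasurableSet, union_eq_self_of_subset_left hSY]
      _ = μ (T '' S ∪ T '' (Y \ S)) := by rw [hcover]
      _ ≤ μ (T '' S) + μ (T '' (Y \ S)) := measure_union_le _ _
      _ ≤ μ (T '' S) + μ (Y \ S) := add_le_add_right (hT _ (hY.diff hS)) _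
  exact le_antisymm (hT S hS) ((ENNReal.add_le_add_iff_right (measure_ne_top μ _)).1 this)

theorem measurePreserving_cond_of_image_eq_self (hTm : Measurable T) (hY : MeasurableSet Y)
    (hTY : T '' Y = Y) (hT : ∀ E, MeasurableSet E → μ (T '' E) ≤ μ E) :
    MeasurePreserving T μ[|Y] μ[|Y] := by
  refine ⟨hTm, Measure.ext fun A hA => ?_⟩
  have hYA : Y ∩ A = T '' (Y ∩ T ⁻¹' A) := by rw [image_inter_preimage, hTY]
  rw [Measure.map_apply hTm hA, cond_apply hY, cond_apply hY, hYA,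
    measure_image_eq_of_image_eq_self hY hTY hT (hY.inter (hTm hA)) inter_subset_left]

end Measure

section Piecewise

variable {α ι : Type*} {g : ι → Function.End α} {X : ι → Set α} {T : α → α}

theorem image_eq_iUnion_image_inter (hX : ∀ x, ∃ i, x ∈ X i)
    (hT : ∀ i, ∀ x ∈ X i, T x = g i x) (E : Set α) : T '' E = ⋃ i, g i '' (E ∩ X i) := by
  ext y
  simp only [mem_image, mem_iUnion]
  constructor
  · rintro ⟨x, hx, rfl⟩
    obtain ⟨i, hi⟩ := hX x
    exact ⟨i, x, ⟨hx, hi⟩, (hT i x hi).symm⟩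
  · rintro ⟨i, x, ⟨hx, hi⟩, rfl⟩
    exact ⟨x, hx, hT i x hi⟩

theorem preimage_eq_iUnion_inter_preimage (hX : ∀ x, ∃ i, x ∈ X i)
    (hT : ∀ i, ∀ x ∈ X i, T x = g i x) (A : Set α) :
    T ⁻¹' A = ⋃ i, X i ∩ g i ⁻¹' A := by
  ext x
  simp only [mem_preimage, mem_iUnion, mem_inter_iff]
  constructor
  · intro hx
    obtain ⟨i, hi⟩ := hX x
    exact ⟨i, hi, show g i x ∈ A by rwa [← hT i x hi]⟩
  · rintro ⟨i, hi, hx⟩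
    rwa [hT i x hi]

theorem finite_preimage_singleton_of_piecewise [Finite ι] (hX : ∀ x, ∃ i, x ∈ X i)
    (hT : ∀ i, ∀ x ∈ X i, T x = g i x) (hg : ∀ i, Injective (g i)) (y : α) :
    (T ⁻¹' {y}).Finite := by
  rw [preimage_eq_iUnion_inter_preimage hX hT]
  exact finite_iUnion fun i => ((finite_singleton y).preimage (hg i).injOn).inter_of_right _

variable [MeasurableSpace α] {μ : Measure α} [Countable ι]

theorem measurable_of_piecewise (hXm : ∀ i, MeasurableSet (X i)) (hX : ∀ x, ∃ i, x ∈ X i)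
    (hT : ∀ i, ∀ x ∈ X i, T x = g i x) (hg : ∀ i, Measurable (g i)) :
    Measurable T := fun A hA => by
  rw [preimage_eq_iUnion_inter_preimage hX hT]
  exact .iUnion fun i => (hXm i).inter (hg i hA)

theorem measurableSet_image_of_piecewise (hXm : ∀ i, MeasurableSet (X i))
    (hX : ∀ x, ∃ i, x ∈ X i) (hT : ∀ i, ∀ x ∈ X i, T x = g i x)
    (hg : ∀ i, MeasurableEmbedding (g i)) {E : Set α} (hE : MeasurableSet E) :
    MeasurableSet (T '' E) := by
  rw [image_eq_iUnion_image_inter hX hT]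
  exact .iUnion fun i => (hg i).measurableSet_image.2 (hE.inter (hXm i))

theorem measure_image_le_of_piecewise (hXm : ∀ i, MeasurableSet (X i))
    (hX : ∀ x, ∃! i, x ∈ X i) (hT : ∀ i, ∀ x ∈ X i, T x = g i x)
    (hg : ∀ i, MeasurableEmbedding (g i)) (hμ : ∀ i, MeasurePreserving (g i) μ μ)
    {E : Set α} (hE : MeasurableSet E) : μ (T '' E) ≤ μ E := by
  have hdisj : Pairwise (Disjoint on fun i => E ∩ X i) := fun i j hij =>
    disjoint_left.2 fun x hi hj => hij ((hX x).unique hi.2 hj.2)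
  have hcover : ⋃ i, E ∩ X i = E := by
    rw [← inter_iUnion, iUnion_eq_univ_iff.2 fun x => (hX x).exists, inter_univ]
  calc μ (T '' E) = μ (⋃ i, g i '' (E ∩ X i)) := by
        rw [image_eq_iUnion_image_inter (fun x => (hX x).exists) hT]
    _ ≤ ∑' i, μ (g i '' (E ∩ X i)) := measure_iUnion_le _
    _ = ∑' i, μ (E ∩ X i) := by
        congr with i
        rw [← (hμ i).measure_preimage_emb (hg i), (hg i).injective.preimage_image]
    _ = μ E := by rw [← measure_iUnion hdisj fun i => hE.inter (hXm i), hcover]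

theorem exists_measurePreserving_cond_of_piecewise [Finite ι] [IsFiniteMeasure μ] [NeZero μ]
    (hXm : ∀ i, MeasurableSet (X i)) (hX : ∀ x, ∃! i, x ∈ X i)
    (hT : ∀ i, ∀ x ∈ X i, T x = g i x) (hg : ∀ i, MeasurableEmbedding (g i))
    (hμ : ∀ i, MeasurePreserving (g i) μ μ)
    (hfin : (Submonoid.closure (range g) : Set (Function.End α)).Finite) :
    ∃ Y, MeasurableSet Y ∧ 0 < μ Y ∧ MeasurePreserving T μ[|Y] μ[|Y] := by
  have hcover : ∀ x, ∃ i, x ∈ X i := fun x => (hX x).exists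
  have hrange : ∀ k, MeasurableSet (range T^[k]) := by
    intro k
    induction k with
    | zero => simp
    | succ k ih =>
      rw [range_iterate_succ]
      exact measurableSet_image_of_piecewise hXm hcover hT hg ih
  refine ⟨⋂ k, range T^[k], .iInter hrange, ?_, ?_⟩
  · refine measure_iInter_range_iterate_pos hfin
      (fun u hu => measurePreserving_of_mem_closure (by simpa using hμ) hu) (fun x => ?_) hrange
    obtain ⟨i, hi⟩ := hcover x
    exact ⟨g i, Submonoid.subset_closure (mem_range_self i), hT i x hi⟩
  · exact measurePreserving_cond_of_image_eq_self
      (measurable_of_piecewise hXm hcover hT fun i => (hg i).measurable) (.iInter hrange)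
      (image_iInter_range_iterate
        (finite_preimage_singleton_of_piecewise hcover hT fun i => (hg i).injective))
      fun E hE => measure_image_le_of_piecewise hXm hX hT hg hμ hE

end Piecewise

theorem exists_acim_of_weakly_periodic_pieces_general
    (d n : ℕ)
    (g : Fin n → Function.End (Torus d))
    (hbij : ∀ i, Function.Bijective (g i))
    (hpres : ∀ i, MeasurePreserving (g i) (volume : Measure (Torus d)) volume)
    (hfin : (Submonoid.closure (Set.range g) : Set (Function.End (Torus d))).Finite)
    (X : Fin n → Set (Torus d))
    (hXmeas : ∀ i, MeasurableSet (X i))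
    (hpart : ∀ x : Torus d, ∃! i : Fin n, x ∈ X i)
    (T : Torus d → Torus d)
    (hT : ∀ i : Fin n, ∀ x ∈ X i, T x = g i x) :
    ∃ Y : Set (Torus d), MeasurableSet Y ∧ 0 < volume Y ∧
      ∃ μ : Measure (Torus d), IsProbabilityMeasure μ ∧
        (∀ A : Set (Torus d), MeasurableSet A → μ (T ⁻¹' A) = μ A) ∧
        μ ≪ (volume : Measure (Torus d)) ∧
        ∀ A : Set (Torus d), MeasurableSet A → μ A = volume (A ∩ Y) / volume Y := by
  obtain ⟨Y, hY, hYpos, hTY⟩ := exists_measurePreserving_cond_of_piecewise hXmeas hpart hT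
    (fun i => (hpres i).measurable.measurableEmbedding (hbij i).injective) hpres hfin
  refine ⟨Y, hY, hYpos, volume[|Y], cond_isProbabilityMeasure hYpos.ne',
    fun A hA => hTY.measure_preimage hA.nullMeasurableSet, cond_absolutelyContinuous,
    fun A _ => ?_⟩
  rw [cond_apply hY, inter_comm, ENNReal.div_eq_inv_mul]

/-- A piecewise map of the torus whose pieces are moved by Haar-measure-preserving
bijections generating a finite submonoid under composition admits an absolutely
continuous invariant probability measure; in fact, the normalized restriction of the
Haar measure to a suitable Borel set `Y` of positive measure. -/
theorem exists_acim_of_weakly_periodic_pieces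
    (d n : ℕ) (hd : 1 ≤ d)
    (g : Fin n → Function.End (Torus d))
    (hbij : ∀ i, Function.Bijective (g i))
    (hpres : ∀ i, MeasurePreserving (g i) (volume : Measure (Torus d)) volume)
    (hfin : (Submonoid.closure (Set.range g) : Set (Function.End (Torus d))).Finite)
    (X : Fin n → Set (Torus d))
    (hXmeas : ∀ i, MeasurableSet (X i))
    (hpart : ∀ x : Torus d, ∃! i : Fin n, x ∈ X i)
    (T : Torus d → Torus d)
    (hT : ∀ i : Fin n, ∀ x ∈ X i, T x = g i x) :
    ∃ Y : Set (Torus d), MeasurableSet Y ∧ 0 < volume Y ∧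
      ∃ μ : Measure (Torus d), IsProbabilityMeasure μ ∧
        (∀ A : Set (Torus d), MeasurableSet A → μ (T ⁻¹' A) = μ A) ∧
        μ ≪ (volume : Measure (Torus d)) ∧
        ∀ A : Set (Torus d), MeasurableSet A → μ A = volume (A ∩ Y) / volume Y :=
  exists_acim_of_weakly_periodic_pieces_general d n g hbij hpres hfin X hXmeas hpart T hT
end

section
/- Define T : [0,1) → [0,1) by: T x = x + 3/4 for x ∈ [0, 1/4); T x = 1 − x for x ∈ [1/4, 1/2); T x = x − 1/2 for x ∈ [1/2, 3/4]; and T x = x for x ∈ (3/4, 1). Then: (i) T(1/4) = 3/4 and T(3/4) = 1/4, so {1/4, 3/4} is a periodic orbit of period 2; and (ii) for every x ∈ [0,1) with x ∉ {0, 1/4, 1/2, 3/4} one has T^n x ∈ (3/4, 1) for all n ≥ 3. In particular, the periodic orbit {1/4, 3/4} is isolated: for every such x, liminf_{n→∞} ρ(T^n x, T^n(1/4)) > 0, where ρ is the standard circle metric ρ(s,t) = min_{k∈ℤ} |s − t − k|. -/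
/-!
Away from the four breakpoints, `isolatedPWI` sends `(0,1/4)` into `(3/4,1)`, `(1/4,1/2)` into
`(1/2,3/4)` and `(1/2,3/4)` into `(0,1/4)`, while it fixes `(3/4,1)` pointwise. So after three
steps every such orbit is stuck at a point `y ∈ (3/4,1)`, whereas the orbit of `1/4` keeps
alternating between `1/4` and `3/4`; the circle distance between the two orbits therefore
eventually takes only the two positive values `ρ(y,1/4)` and `ρ(y,3/4)`.
-/

/-- The non-orientation-preserving piecewise isometry of the circle `[0,1)`:
`x ↦ x + 3/4` on `[0,1/4)`, `x ↦ 1 - x` on `[1/4,1/2)`, `x ↦ x - 1/2` on `[1/2,3/4]`,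
and `x ↦ x` on `(3/4,1)`. -/
noncomputable def isolatedPWI (x : ℝ) : ℝ :=
  if x < 1/4 then x + 3/4
  else if x < 1/2 then 1 - x
  else if x ≤ 3/4 then x - 1/2
  else x

open Set Filter Function

theorem Function.iterate_eq_of_isFixedPt_iterate {α : Type*} {f : α → α} {x : α} {m n : ℕ}
    (hfix : IsFixedPt f (f^[m] x)) (hmn : m ≤ n) : f^[n] x = f^[m] x := by
  obtain ⟨k, rfl⟩ := Nat.exists_eq_add_of_le hmn
  rw [add_comm, iterate_add_apply, hfix.iterate k]

theorem Filter.liminf_pos_of_eventually_ge {ι : Type*} {l : Filter ι} [l.NeBot] {u : ι → ℝ}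
    {B c : ℝ} (hc : 0 < c) (hB : ∀ i, u i ≤ B) (h : ∀ᶠ i in l, c ≤ u i) : 0 < liminf u l :=
  hc.trans_le (le_liminf_of_le (isCoboundedUnder_ge_of_le l hB) h)

namespace AddCircle

variable {p : ℝ}

theorem dist_le_half_period (hp : p ≠ 0) (a b : AddCircle p) : dist a b ≤ |p| / 2 := by
  rw [dist_eq_norm]
  exact norm_le_half_period p hp

theorem dist_coe_pos [Fact (0 < p)] {a b : ℝ} (ha : a ∈ Ico 0 p) (hb : b ∈ Ico 0 p)
    (hab : a ≠ b) : 0 < dist (a : AddCircle p) b := by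
  rw [← zero_add p] at ha hb
  exact dist_pos.2 fun h => hab ((coe_eq_coe_iff_of_mem_Ico ha hb).1 h)

end AddCircle

section isolatedPWI

variable {x : ℝ}

theorem isolatedPWI_of_lt (h : x < 1/4) : isolatedPWI x = x + 3/4 := if_pos h

theorem isolatedPWI_of_mem_Ico (h : x ∈ Ico (1/4 : ℝ) (1/2)) : isolatedPWI x = 1 - x := by
  unfold isolatedPWI
  rw [if_neg h.1.not_gt, if_pos h.2]

theorem isolatedPWI_of_mem_Icc (h : x ∈ Icc (1/2 : ℝ) (3/4)) : isolatedPWI x = x - 1/2 := by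
  unfold isolatedPWI
  rw [if_neg (by linarith [h.1]), if_neg h.1.not_gt, if_pos h.2]

theorem isolatedPWI_of_gt (h : 3/4 < x) : isolatedPWI x = x := by
  unfold isolatedPWI
  rw [if_neg (by linarith), if_neg (by linarith), if_neg h.not_ge]

theorem isolatedPWI_quarter : isolatedPWI (1/4) = 3/4 := by
  rw [isolatedPWI_of_mem_Ico ⟨le_rfl, by norm_num⟩]
  norm_num

theorem isolatedPWI_three_quarters : isolatedPWI (3/4) = 1/4 := by
  rw [isolatedPWI_of_mem_Icc ⟨by norm_num, le_rfl⟩]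
  norm_num

theorem mapsTo_isolatedPWI_periodic_orbit :
    MapsTo isolatedPWI {1/4, 3/4} ({1/4, 3/4} : Set ℝ) := by
  rintro z (rfl | rfl)
  · exact .inr isolatedPWI_quarter
  · exact .inl isolatedPWI_three_quarters

theorem mapsTo_isolatedPWI_Ioo_zero_quarter :
    MapsTo isolatedPWI (Ioo 0 (1/4)) (Ioo (3/4 : ℝ) 1) := by
  rintro z ⟨hz₀, hz₁⟩
  rw [isolatedPWI_of_lt hz₁]
  constructor <;> linarith

theorem mapsTo_isolatedPWI_Ioo_quarter_half :
    MapsTo isolatedPWI (Ioo (1/4) (1/2)) (Ioo (1/2 : ℝ) (3/4)) := by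
  rintro z ⟨hz₀, hz₁⟩
  rw [isolatedPWI_of_mem_Ico ⟨hz₀.le, hz₁⟩]
  constructor <;> linarith

theorem mapsTo_isolatedPWI_Ioo_half_three_quarters :
    MapsTo isolatedPWI (Ioo (1/2) (3/4)) (Ioo (0 : ℝ) (1/4)) := by
  rintro z ⟨hz₀, hz₁⟩
  rw [isolatedPWI_of_mem_Icc ⟨hz₀.le, hz₁.le⟩]
  constructor <;> linarith

theorem mapsTo_isolatedPWI_Ioo_three_quarters_one :
    MapsTo isolatedPWI (Ioo (3/4) 1) (Ioo (3/4 : ℝ) 1) := fun z hz => by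
  rwa [isolatedPWI_of_gt hz.1]

theorem isolatedPWI_iterate_three_mem_Ioo (hx : x ∈ Ico (0 : ℝ) 1)
    (hxs : x ∉ ({0, 1/4, 1/2, 3/4} : Set ℝ)) : isolatedPWI^[3] x ∈ Ioo (3/4 : ℝ) 1 := by
  simp only [mem_insert_iff, mem_singleton_iff, not_or] at hxs
  obtain ⟨hx₀, hx₁, hx₂, hx₃⟩ := hxs
  have hfix := mapsTo_isolatedPWI_Ioo_three_quarters_one
  rcases lt_or_gt_of_ne hx₁ with hlt₁ | hgt₁
  · exact ((hfix.iterate 2).comp mapsTo_isolatedPWI_Ioo_zero_quarter)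
      ⟨lt_of_le_of_ne hx.1 (Ne.symm hx₀), hlt₁⟩
  rcases lt_or_gt_of_ne hx₂ with hlt₂ | hgt₂
  · exact (mapsTo_isolatedPWI_Ioo_zero_quarter.comp
      (mapsTo_isolatedPWI_Ioo_half_three_quarters.comp mapsTo_isolatedPWI_Ioo_quarter_half))
      ⟨hgt₁, hlt₂⟩
  rcases lt_or_gt_of_ne hx₃ with hlt₃ | hgt₃
  · exact (hfix.comp (mapsTo_isolatedPWI_Ioo_zero_quarter.comp
      mapsTo_isolatedPWI_Ioo_half_three_quarters)) ⟨hgt₂, hlt₃⟩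
  · exact hfix.iterate 3 ⟨hgt₃, hx.2⟩

end isolatedPWI

/-- `{1/4, 3/4}` is a 2-periodic orbit of `isolatedPWI`, every other point of `[0,1)`
off `{0, 1/4, 1/2, 3/4}` is eventually trapped in `(3/4,1)`, and consequently the
periodic orbit is isolated: the liminf of the circle distance between the orbit of any
such point and the orbit of `1/4` is positive. -/
theorem isolated_periodic_orbit_of_flip_PWI :
    isolatedPWI (1/4) = 3/4 ∧ isolatedPWI (3/4) = 1/4 ∧
    (∀ x ∈ Set.Ico (0:ℝ) 1, x ∉ ({0, 1/4, 1/2, 3/4} : Set ℝ) →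
      (∀ n : ℕ, 3 ≤ n → isolatedPWI^[n] x ∈ Set.Ioo (3/4:ℝ) 1) ∧
      0 < Filter.liminf
        (fun n : ℕ => dist ((isolatedPWI^[n] x : ℝ) : AddCircle (1:ℝ))
          ((isolatedPWI^[n] (1/4) : ℝ) : AddCircle (1:ℝ)))
        Filter.atTop) := by
  refine ⟨isolatedPWI_quarter, isolatedPWI_three_quarters, fun x hx hxs => ?_⟩
  have hy := isolatedPWI_iterate_three_mem_Ioo hx hxs
  have hstuck : ∀ n, 3 ≤ n → isolatedPWI^[n] x = isolatedPWI^[3] x := fun n hn =>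
    iterate_eq_of_isFixedPt_iterate (isolatedPWI_of_gt hy.1) hn
  refine ⟨fun n hn => hstuck n hn ▸ hy, ?_⟩
  have : Fact ((0 : ℝ) < 1) := ⟨one_pos⟩
  have hyIco : isolatedPWI^[3] x ∈ Ico (0 : ℝ) 1 := ⟨by linarith [hy.1], hy.2⟩
  have hdist_pos (z : ℝ) (hz : z ∈ Icc (0 : ℝ) (3/4)) :
      0 < dist ((isolatedPWI^[3] x : ℝ) : AddCircle (1:ℝ)) z :=
    AddCircle.dist_coe_pos hyIco ⟨hz.1, by linarith [hz.2]⟩ (by linarith [hy.1, hz.2])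
  refine liminf_pos_of_eventually_ge (lt_min (hdist_pos (1/4) (by norm_num))
    (hdist_pos (3/4) (by norm_num))) (fun n => AddCircle.dist_le_half_period one_ne_zero _ _) ?_
  filter_upwards [eventually_ge_atTop 3] with n hn
  rw [hstuck n hn]
  rcases mapsTo_isolatedPWI_periodic_orbit.iterate n (mem_insert _ _)
    with h | h <;> rw [h]
  exacts [min_le_left _ _, min_le_right _ _]
end
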